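/- arXiv:2304.08119 — 2 statements merged into one kernel-verified Lean document; each statement's English description precedes it below -/
import Mathlib

section
/- Let m ≥ 3 be odd and A ∈ S(m,2) with A = x^{⊗m} + y^{⊗m} for linearly independent x, y ∈ ℝ². If A is a Q-tensor, then A is an R₀-tensor. -/
/-- Action of `A = c₁ x^{⊗m} + c₂ y^{⊗m}` on `u ∈ ℝ²`. -/
def act2 (m : ℕ) (c₁ c₂ : ℝ) (x y u : Fin 2 → ℝ) : Fin 2 → ℝ :=
  fun i => c₁ * x i * (∑ j, x j * u j) ^ (m - 1) +
           c₂ * y i * (∑ j, y j * u j) ^ (m - 1)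

/-- `u` solves `TCP(A, q)` in dimension 2. -/
def tcpSol2 (F : (Fin 2 → ℝ) → (Fin 2 → ℝ)) (q u : Fin 2 → ℝ) : Prop :=
  (∀ i, 0 ≤ u i) ∧ (∀ i, 0 ≤ F u i + q i) ∧ (∑ i, u i * (F u i + q i)) = 0

/-!
If `u ≥ 0` is a nonzero solution of `TCP(A, 0)`, then `(x ⬝ᵥ u)^m + (y ⬝ᵥ u)^m = 0` and `m` odd
give `y ⬝ᵥ u = -(x ⬝ᵥ u)`, nonzero by linear independence, so `A u^{m-1} = (x + y)(x ⬝ᵥ u)^{m-1}`.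
Hence `x + y ≥ 0` and `x i + y i = 0` wherever `u i > 0`, with `x i ≠ 0` again by independence.
Up to swapping `x` and `y`, `x i > 0`, and then `TCP(A, q)` is unsolvable for a suitable `q`.
-/

open Matrix

theorem LinearIndependent.eq_zero_of_forall_dotProduct_eq_zero {ι K : Type*} [Fintype ι]
    [DecidableEq ι] [Field K] {v : ι → ι → K} (hv : LinearIndependent K v) {u : ι → K}
    (hu : ∀ i, v i ⬝ᵥ u = 0) : u = 0 := by
  have hinj := mulVec_injective_iff_isUnit.2 (linearIndependent_rows_iff_isUnit.1 hv)
  exact hinj (by ext i; simp [mulVec, hu])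

theorem dotProduct_fin_two_of_ne {R : Type*} [AddCommMonoid R] [Mul R] {i j : Fin 2}
    (hij : i ≠ j) (a b : Fin 2 → R) : a ⬝ᵥ b = a i * b i + a j * b j := by
  fin_cases i <;> fin_cases j <;> simp_all [dotProduct, Fin.sum_univ_two, add_comm]

theorem pos_of_pow_lt_pow_of_add_nonneg {R : Type*} [CommRing R] [LinearOrder R]
    [IsStrictOrderedRing R] {a b : R} {n : ℕ} (hn : Even n) (h : b ^ n < a ^ n)
    (hab : 0 ≤ a + b) : 0 < a := by
  rw [← hn.pow_abs, ← hn.pow_abs a] at h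
  have := lt_of_pow_lt_pow_left₀ n (abs_nonneg a) h
  by_contra ha
  linarith [le_abs_self b, abs_of_nonpos (not_lt.1 ha)]

theorem tcpSol2.mul_eq_zero {F : (Fin 2 → ℝ) → Fin 2 → ℝ} {q u : Fin 2 → ℝ}
    (h : tcpSol2 F q u) (i : Fin 2) : u i * (F u i + q i) = 0 :=
  (Finset.sum_eq_zero_iff_of_nonneg fun j _ => mul_nonneg (h.1 j) (h.2.1 j)).1 h.2.2 i
    (Finset.mem_univ i)

section

variable {m : ℕ} {x y : Fin 2 → ℝ}

theorem act2_one_one_apply (u : Fin 2 → ℝ) (i : Fin 2) :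
    act2 m 1 1 x y u i = x i * (x ⬝ᵥ u) ^ (m - 1) + y i * (y ⬝ᵥ u) ^ (m - 1) := by
  simp [act2, dotProduct]

theorem act2_one_one_comm : act2 m 1 1 x y = act2 m 1 1 y x := by
  funext u i
  exact add_comm _ _

theorem dotProduct_act2_one_one (hm : m ≠ 0) (u : Fin 2 → ℝ) :
    u ⬝ᵥ act2 m 1 1 x y u = (x ⬝ᵥ u) ^ m + (y ⬝ᵥ u) ^ m := by
  have : act2 m 1 1 x y u = (x ⬝ᵥ u) ^ (m - 1) • x + (y ⬝ᵥ u) ^ (m - 1) • y := by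
    ext i
    rw [act2_one_one_apply]
    simp only [Pi.add_apply, Pi.smul_apply, smul_eq_mul]
    ring
  rw [this, dotProduct_add, dotProduct_smul, dotProduct_smul, smul_eq_mul, smul_eq_mul,
    dotProduct_comm u x, dotProduct_comm u y, pow_sub_one_mul hm, pow_sub_one_mul hm]

theorem add_nonneg_and_exists_add_eq_zero_of_tcpSol2_zero (hm : Odd m)
    (hxy : LinearIndependent ℝ ![x, y])
    {u : Fin 2 → ℝ} (hu : tcpSol2 (act2 m 1 1 x y) 0 u) (hu0 : u ≠ 0) :
    (∀ k, 0 ≤ x k + y k) ∧ ∃ i, x i + y i = 0 ∧ x i ≠ 0 := by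
  have hsum : (x ⬝ᵥ u) ^ m + (y ⬝ᵥ u) ^ m = 0 := by
    rw [← dotProduct_act2_one_one hm.pos.ne', ← hu.2.2]
    simp [dotProduct]
  have hyu : y ⬝ᵥ u = -(x ⬝ᵥ u) := by
    rw [← hm.pow_inj, hm.neg_pow]
    linarith
  have hxu : x ⬝ᵥ u ≠ 0 := fun hxu ↦ hu0 <| hxy.eq_zero_of_forall_dotProduct_eq_zero <|
    Fin.forall_fin_two.2 ⟨hxu, by simp [hyu, hxu]⟩
  have hpow : 0 < (x ⬝ᵥ u) ^ (m - 1) := (Nat.Odd.sub_odd hm odd_one).pow_pos hxu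
  have hF (k : Fin 2) : act2 m 1 1 x y u k = (x k + y k) * (x ⬝ᵥ u) ^ (m - 1) := by
    rw [act2_one_one_apply, hyu, (Nat.Odd.sub_odd hm odd_one).neg_pow]
    ring
  refine ⟨fun k ↦ nonneg_of_mul_nonneg_left (by simpa [hF] using hu.2.1 k) hpow, ?_⟩
  obtain ⟨i, hi⟩ := Function.ne_iff.1 hu0
  have hcompl := hu.mul_eq_zero i
  rw [hF, Pi.zero_apply, add_zero] at hcompl
  have hxyi : x i + y i = 0 :=
    (mul_eq_zero.1 ((mul_eq_zero.1 hcompl).resolve_left hi)).resolve_right hpow.ne'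
  refine ⟨i, hxyi, fun hxi ↦ Pi.single_ne_zero_iff.2 one_ne_zero <|
    hxy.eq_zero_of_forall_dotProduct_eq_zero (u := Pi.single i (1 : ℝ)) ?_⟩
  simp [Fin.forall_fin_two, dotProduct_single, hxi, show y i = 0 by linarith]

/- With `q = (-x i, |x j| + 1)` at `(i, j)`, the `i`-th inequality forces
`(x ⬝ᵥ v)^{m-1} - (y ⬝ᵥ v)^{m-1} ≥ 1`; this rules out `v j = 0`, and complementarity at `j`
then fails because `x j (x ⬝ᵥ v)^{m-1} + y j (y ⬝ᵥ v)^{m-1} + |x j| + 1 ≥ 1`. -/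
theorem exists_forall_not_tcpSol2_of_add_eq_zero (hm : Even (m - 1)) {i j : Fin 2}
    (hij : i ≠ j) (hx0 : x i ≠ 0) (hi : x i + y i = 0) (hj : 0 ≤ x j + y j) :
    ∃ q, ∀ v, ¬ tcpSol2 (act2 m 1 1 x y) q v := by
  wlog hxi : 0 < x i generalizing x y
  · rw [act2_one_one_comm]
    have hxi' : x i < 0 := lt_of_le_of_ne (not_lt.1 hxi) hx0
    exact this (x := y) (y := x) (by linarith) (by linarith) (by linarith) (by linarith)
  have hyi : y i = -x i := by linarith
  refine ⟨fun k ↦ if k = i then -x i else |x j| + 1, fun v hv ↦ ?_⟩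
  set α := x ⬝ᵥ v
  set β := y ⬝ᵥ v
  have hα : α = x i * v i + x j * v j := dotProduct_fin_two_of_ne hij x v
  have hβ : β = -x i * v i + y j * v j := by rw [← hyi]; exact dotProduct_fin_two_of_ne hij y v
  have hwi : act2 m 1 1 x y v i + (if i = i then -x i else |x j| + 1) =
      x i * (α ^ (m - 1) - β ^ (m - 1) - 1) := by
    rw [act2_one_one_apply, if_pos rfl, hyi]
    ring
  have hwj : act2 m 1 1 x y v j + (if j = i then -x i else |x j| + 1) =
      x j * α ^ (m - 1) + y j * β ^ (m - 1) + |x j| + 1 := by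
    rw [act2_one_one_apply, if_neg hij.symm]
    ring
  have hD : 1 ≤ α ^ (m - 1) - β ^ (m - 1) := by
    have := nonneg_of_mul_nonneg_right (hwi ▸ hv.2.1 i) hxi
    linarith
  have hαβ : 0 ≤ α + β := by
    rw [hα, hβ]
    linarith [mul_nonneg hj (hv.1 j)]
  have hαpos : 0 < α := pos_of_pow_lt_pow_of_add_nonneg hm (by linarith) hαβ
  have hvj : 0 < v j := by
    refine (hv.1 j).lt_of_ne fun hvj ↦ ?_
    have : β = -α := by rw [hα, hβ, ← hvj]; ring
    rw [this, hm.neg_pow] at hD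
    linarith
  have hwj0 := (mul_eq_zero.1 (hwj ▸ hv.mul_eq_zero j)).resolve_left hvj.ne'
  have hxj : 0 ≤ x j * (α ^ (m - 1) - β ^ (m - 1) - 1) := by
    rcases le_or_gt 0 (x j) with hxj_nonneg | hxj_neg
    · exact mul_nonneg hxj_nonneg (by linarith)
    · have hvi : 0 < v i := by
        refine (hv.1 i).lt_of_ne fun hvi ↦ ?_
        rw [hα, ← hvi] at hαpos
        nlinarith [hv.1 j]
      have := (mul_eq_zero.1 (hwi ▸ hv.mul_eq_zero i)).resolve_left hvi.ne'
      rw [(mul_eq_zero.1 this).resolve_left hxi.ne', mul_zero]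
  linarith [mul_nonneg hj (hm.pow_nonneg β), neg_abs_le (x j)]

end

theorem odd_Q_implies_R0_general (m : ℕ) (hodd : Odd m)
    (x y : Fin 2 → ℝ) (hxy : LinearIndependent ℝ ![x, y])
    (hQ : ∀ q : Fin 2 → ℝ, ∃ u, tcpSol2 (act2 m 1 1 x y) q u) :
    ∀ u : Fin 2 → ℝ, tcpSol2 (act2 m 1 1 x y) 0 u → u = 0 := by
  intro u hu
  by_contra hu0
  obtain ⟨hadd, i, hi, hxi⟩ :=
    add_nonneg_and_exists_add_eq_zero_of_tcpSol2_zero hodd hxy hu hu0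
  obtain ⟨j, hji⟩ := exists_ne i
  obtain ⟨q, hq⟩ := exists_forall_not_tcpSol2_of_add_eq_zero (Nat.Odd.sub_odd hodd odd_one)
    hji.symm hxi hi (hadd j)
  obtain ⟨v, hv⟩ := hQ q
  exact hq v hv

/-- For odd `m ≥ 3` and linearly independent `x, y`, if `A = x^{⊗m} + y^{⊗m}` is a
Q-tensor then it is an R₀-tensor. -/
theorem odd_Q_implies_R0 (m : ℕ) (hm : 3 ≤ m) (hodd : Odd m)
    (x y : Fin 2 → ℝ) (hxy : LinearIndependent ℝ ![x, y])
    (hQ : ∀ q : Fin 2 → ℝ, ∃ u, tcpSol2 (act2 m 1 1 x y) q u) :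
    ∀ u : Fin 2 → ℝ, tcpSol2 (act2 m 1 1 x y) 0 u → u = 0 :=
  odd_Q_implies_R0_general m hodd x y hxy hQ
end

section
/- Let m ≥ 2 be even, and x, y ∈ ℝ² linearly independent with A = x^{⊗m} − y^{⊗m}, so (A u^{m-1})_i = x_i(xᵀu)^{m-1} − y_i(yᵀu)^{m-1}. If A is not an R₀-tensor, then there exists α ∈ {1, −1} such that either (y₁ = α x₁ and x₁(x₂ − α y₂) > 0) or (y₂ = α x₂ and x₂(x₁ − α y₁) > 0). -/
open Matrix

lemma exists_sign_of_pow_eq_pow {m : ℕ} (hm : m ≠ 0) {a b : ℝ} (h : a ^ m = b ^ m) :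
    ∃ α : ℝ, (α = 1 ∨ α = -1) ∧ b = α * a := by
  rcases (pow_eq_pow_iff_of_ne_zero hm).mp h with h | ⟨h, -⟩
  · exact ⟨1, .inl rfl, by rw [h, one_mul]⟩
  · exact ⟨-1, .inr rfl, by rw [h, neg_one_mul, neg_neg]⟩

lemma mul_nonneg_of_mul_odd_pow_nonneg {n : ℕ} (hn : Odd n) {a b : ℝ} (h : 0 ≤ b * a ^ n) :
    0 ≤ a * b := by
  obtain ⟨k, rfl⟩ := hn
  rcases eq_or_ne a 0 with rfl | ha
  · simp
  refine nonneg_of_mul_nonneg_left (b := (a ^ k) ^ 2) ?_ (by positivity)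
  calc 0 ≤ b * a ^ (2 * k + 1) := h
    _ = a * b * (a ^ k) ^ 2 := by ring

lemma act2_eq (m : ℕ) (c₁ c₂ : ℝ) (x y u : Fin 2 → ℝ) (i : Fin 2) :
    act2 m c₁ c₂ x y u i = c₁ * x i * (x ⬝ᵥ u) ^ (m - 1) + c₂ * y i * (y ⬝ᵥ u) ^ (m - 1) := by
  simp only [act2, dotProduct]

lemma sum_mul_act2 {m : ℕ} (hm : m ≠ 0) (c₁ c₂ : ℝ) (x y u : Fin 2 → ℝ) :
    ∑ i, u i * act2 m c₁ c₂ x y u i = c₁ * (x ⬝ᵥ u) ^ m + c₂ * (y ⬝ᵥ u) ^ m := by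
  obtain ⟨n, rfl⟩ := Nat.exists_eq_succ_of_ne_zero hm
  simp only [act2_eq, dotProduct, Fin.sum_univ_two, Nat.succ_sub_one, pow_succ]
  ring

lemma act2_of_dotProduct_eq_mul {m : ℕ} (hodd : Odd (m - 1)) {α : ℝ} (hα : α = 1 ∨ α = -1)
    (c₁ c₂ : ℝ) {x y u : Fin 2 → ℝ} (h : y ⬝ᵥ u = α * x ⬝ᵥ u) (i : Fin 2) :
    act2 m c₁ c₂ x y u i = (c₁ * x i + c₂ * α * y i) * (x ⬝ᵥ u) ^ (m - 1) := by
  have hpow : α ^ (m - 1) = α := by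
    rcases hα with rfl | rfl
    · exact one_pow _
    · exact hodd.neg_one_pow
  rw [act2_eq, h, mul_pow, hpow]
  ring

lemma eq_zero_of_dotProduct_pair_eq_zero {x y u : Fin 2 → ℝ} (hxy : LinearIndependent ℝ ![x, y])
    (hx : x ⬝ᵥ u = 0) (hy : y ⬝ᵥ u = 0) : u = 0 := by
  have hspan : Submodule.span ℝ {x, y} = ⊤ := by
    rw [← range_cons_cons_empty x y ![]]
    exact hxy.span_eq_top_of_card_eq_finrank (by simp)
  obtain ⟨a, b, hu⟩ := Submodule.mem_span_pair.mp (hspan ▸ Submodule.mem_top : u ∈ _)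
  rw [← dotProduct_self_eq_zero]
  nth_rewrite 1 [← hu]
  simp [add_dotProduct, smul_dotProduct, hx, hy]

lemma sub_smul_ne_zero_of_linearIndependent {R M : Type*} [Ring R] [Nontrivial R]
    [AddCommGroup M] [Module R M] {x y : M} (hxy : LinearIndependent R ![x, y]) (α : R) :
    x - α • y ≠ 0 := fun h ↦
  one_ne_zero (LinearIndependent.pair_iff.mp hxy 1 (-α) (by rw [one_smul, neg_smul, ← sub_eq_add_neg, h])).1

lemma eq_zero_and_pos_of_complementary {S xi xj ui uj wi wj : ℝ} (hui : 0 < ui)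
    (hwi : ui * wi = 0) (hwj : uj * wj = 0) (hw : wi = 0 → wj ≠ 0) (hS : S ≠ 0)
    (hSu : S = xi * ui + xj * uj) (hSw : 0 ≤ S * wj) : wi = 0 ∧ 0 < xi * wj := by
  have hwi0 : wi = 0 := (mul_eq_zero.mp hwi).resolve_left hui.ne'
  have huj : uj = 0 := (mul_eq_zero.mp hwj).resolve_right (hw hwi0)
  rw [hSu, huj, mul_zero, add_zero] at hS hSw
  refine ⟨hwi0, pos_of_mul_pos_left (b := ui) ?_ hui.le⟩
  have := hSw.lt_of_ne (mul_ne_zero hS (hw hwi0)).symm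
  linarith

lemma mul_eq_zero_of_sum_mul_mul_pow_eq_zero {ι : Type*} [Fintype ι] {n : ℕ} {S : ℝ}
    (hS : S ≠ 0) {u w : ι → ℝ} (hu : ∀ i, 0 ≤ u i) (hw : ∀ i, 0 ≤ w i * S ^ n)
    (hsum : ∑ i, u i * (w i * S ^ n) = 0) (i : ι) : u i * w i = 0 := by
  have := (Finset.sum_eq_zero_iff_of_nonneg fun j _ ↦ mul_nonneg (hu j) (hw j)).mp hsum i
    (Finset.mem_univ i)
  rw [← mul_assoc] at this
  exact (mul_eq_zero.mp this).resolve_right (pow_ne_zero _ hS)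

lemma eq_zero_and_pos_of_complementary_fin_two {x u w : Fin 2 → ℝ} (hu : ∀ i, 0 ≤ u i)
    (hu0 : u ≠ 0) (hw0 : w ≠ 0) (hslack : ∀ i, u i * w i = 0) (hS : x ⬝ᵥ u ≠ 0)
    (hsign : ∀ i, 0 ≤ x ⬝ᵥ u * w i) :
    (w 0 = 0 ∧ 0 < x 0 * w 1) ∨ (w 1 = 0 ∧ 0 < x 1 * w 0) := by
  obtain ⟨i, hi⟩ : ∃ i, 0 < u i := by
    by_contra! h
    exact hu0 (funext fun i ↦ le_antisymm (h i) (hu i))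
  fin_cases i
  · refine .inl (eq_zero_and_pos_of_complementary hi (hslack 0) (hslack 1)
      (fun h0 h1 ↦ hw0 ?_) hS (Fin.sum_univ_two _) (hsign 1))
    exact funext fun i ↦ by fin_cases i <;> assumption
  · refine .inr (eq_zero_and_pos_of_complementary hi (hslack 1) (hslack 0)
      (fun h1 h0 ↦ hw0 ?_) hS ((Fin.sum_univ_two _).trans (add_comm _ _)) (hsign 0))
    exact funext fun i ↦ by fin_cases i <;> assumption

/-- For even `m ≥ 2` and linearly independent `x, y`, if `A = x^{⊗m} - y^{⊗m}` is
not an R₀-tensor, then for some `α = ±1`, either `y₁ = α x₁` and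
`x₁ (x₂ - α y₂) > 0`, or `y₂ = α x₂` and `x₂ (x₁ - α y₁) > 0`. -/
theorem even_not_R0_structure (m : ℕ) (hm : 2 ≤ m) (heven : Even m)
    (x y : Fin 2 → ℝ) (hxy : LinearIndependent ℝ ![x, y])
    (hnotR0 : ¬ (∀ u : Fin 2 → ℝ,
      (∀ i, 0 ≤ u i) →
      (∀ i, 0 ≤ act2 m 1 (-1) x y u i) →
      (∑ i, u i * act2 m 1 (-1) x y u i) = 0 →
      u = 0)) :
    ∃ α : ℝ, (α = 1 ∨ α = -1) ∧
      ((y 0 = α * x 0 ∧ 0 < x 0 * (x 1 - α * y 1)) ∨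
       (y 1 = α * x 1 ∧ 0 < x 1 * (x 0 - α * y 0))) := by
  have hm0 : m ≠ 0 := by omega
  have hodd : Odd (m - 1) := Nat.Even.sub_odd (by omega) heven odd_one
  push Not at hnotR0
  obtain ⟨u, hu, hAu, hpair, hu0⟩ := hnotR0
  have hpow : (x ⬝ᵥ u) ^ m = (y ⬝ᵥ u) ^ m := by
    rwa [sum_mul_act2 hm0, one_mul, neg_one_mul, add_neg_eq_zero] at hpair
  obtain ⟨α, hα, hyx⟩ := exists_sign_of_pow_eq_pow hm0 hpow
  have hS : x ⬝ᵥ u ≠ 0 := fun hx ↦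
    hu0 (eq_zero_of_dotProduct_pair_eq_zero hxy hx (by rw [hyx, hx, mul_zero]))
  simp only [act2_of_dotProduct_eq_mul hodd hα _ _ hyx, one_mul, neg_mul,
    ← sub_eq_add_neg] at hAu hpair
  have hα2 : α * α = 1 := by rcases hα with rfl | rfl <;> norm_num
  have hyx_coord (i : Fin 2) (h : x i - α * y i = 0) : y i = α * x i := by
    linear_combination -α * h - y i * hα2
  refine ⟨α, hα, ?_⟩
  rcases eq_zero_and_pos_of_complementary_fin_two (w := x - α • y) hu hu0
    (sub_smul_ne_zero_of_linearIndependent hxy α)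
    (mul_eq_zero_of_sum_mul_mul_pow_eq_zero hS hu hAu hpair) hS
    (fun i ↦ mul_nonneg_of_mul_odd_pow_nonneg hodd (hAu i)) with ⟨h0, h1⟩ | ⟨h1, h0⟩
  · exact .inl ⟨hyx_coord 0 h0, h1⟩
  · exact .inr ⟨hyx_coord 1 h1, h0⟩
end
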